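/- Let n ≥ 3 and let DW_n = 2C_n + K_1 be the double wheel graph obtained by joining every vertex of two disjoint cycles of order n to one common external vertex. Then the chromatic compound curling number of DW_n equals n² if n is even and 2(n−1)² if n is odd. -/

import Mathlib

open SimpleGraph Finset

/-- A proper vertex colouring of `G` with colour set `Fin k`. -/
def IsProperColoring {V : Type*} (G : SimpleGraph V) {k : ℕ} (C : V → Fin k) : Prop :=
  ∀ ⦃v w⦄, G.Adj v w → C v ≠ C w

/-- The chromatic number of `G`, as a natural number. -/
noncomputable def chi {V : Type*} (G : SimpleGraph V) : ℕ :=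
  G.chromaticNumber.toNat

/-- θ(cᵢ): the number of vertices receiving colour `i` under the colouring `C`. -/
def theta {V : Type*} [Fintype V] {k : ℕ} (C : V → Fin k) (i : Fin k) : ℕ :=
  (Finset.univ.filter fun v => C v = i).card

/-- The list of colour class sizes of `C`, sorted in descending order. -/
def classSizesDesc {V : Type*} [Fintype V] {k : ℕ} (C : V → Fin k) : List ℕ :=
  (List.insertionSort (· ≤ ·) (List.ofFn fun i => theta C i)).reverse

/-- A χ⁻-colouring of `G`: a proper colouring with exactly χ(G) colours such that,
greedily, the colour class of `c₁` is as large as possible, then the colour class of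
`c₂` is as large as possible among the remaining vertices, and so on; equivalently,
the descending sequence of colour class sizes is lexicographically maximal among
all proper colourings with χ(G) colours. -/
def IsChiMinusColoring {V : Type*} [Fintype V] (G : SimpleGraph V)
    (C : V → Fin (chi G)) : Prop :=
  IsProperColoring G C ∧
    ∀ C' : V → Fin (chi G), IsProperColoring G C' →
      ¬ List.Lex (· < ·) (classSizesDesc C) (classSizesDesc C')

/-- The double wheel graph `DW_n = 2Cₙ + K₁`: two disjoint cycles of order `n`
(indexed by `Fin 2`), every vertex of which is joined to a common external
central vertex `none`. -/
def doubleWheelG (n : ℕ) : SimpleGraph (Option (Fin 2 × Fin n)) :=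
  SimpleGraph.fromRel (fun a b =>
    match a, b with
    | some (i, v), some (j, w) => i = j ∧ w.val = (v.val + 1) % n
    | none, some _ => True
    | _, _ => False)

/-! ### Auxiliary lemmas -/

lemma dw_adj_none {n : ℕ} (x : Fin 2 × Fin n) : (doubleWheelG n).Adj none (some x) :=
  ⟨by simp, Or.inl trivial⟩

lemma dw_adj_cyc {n : ℕ} (hn : 2 ≤ n) (j : Fin 2) (v w : Fin n) (hw : w.val = (v.val+1) % n) :
    (doubleWheelG n).Adj (some (j,v)) (some (j,w)) := by
  have hne : v.val ≠ (v.val+1) % n := by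
    rcases Nat.lt_or_ge (v.val+1) n with h|h
    · rw [Nat.mod_eq_of_lt h]; omega
    · have hv := v.isLt
      have : v.val + 1 = n := by omega
      rw [this, Nat.mod_self]; omega
  exact ⟨by simp [Prod.ext_iff, Fin.ext_iff]; intro _; omega, Or.inl ⟨rfl, hw⟩⟩

lemma indep_le (n : ℕ) (hn : 2 ≤ n) (S : Finset (Fin n))
    (h : ∀ v ∈ S, (⟨(v.val+1)%n, Nat.mod_lt _ (by omega)⟩ : Fin n) ∉ S) : S.card ≤ n / 2 := by
  haveI : NeZero n := ⟨by omega⟩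
  have h1 : ∀ v : Fin n, v + 1 = (⟨(v.val+1)%n, Nat.mod_lt _ (by omega)⟩ : Fin n) := by
    intro v
    ext
    simp [Fin.add_def, Fin.val_one', Nat.mod_eq_of_lt (show 1 < n by omega)]
  have hinj : Function.Injective (fun v : Fin n => v + 1) := add_left_injective 1
  set T := S.image (fun v : Fin n => v + 1) with hT
  have hcard : T.card = S.card := Finset.card_image_of_injective _ hinj
  have hdisj : Disjoint S T := by
    rw [Finset.disjoint_right]
    rintro a ha haS
    rw [hT, Finset.mem_image] at ha
    obtain ⟨v, hv, rfl⟩ := ha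
    exact h v hv (by rw [← h1 v]; exact haS)
  have hu : (S ∪ T).card = S.card + T.card := Finset.card_union_of_disjoint hdisj
  have hle : (S ∪ T).card ≤ n := by
    have := Finset.card_le_univ (S ∪ T)
    simpa using this
  omega

lemma theta_hub {n k : ℕ} (C : Option (Fin 2 × Fin n) → Fin k)
    (hp : IsProperColoring (doubleWheelG n) C) : theta C (C none) = 1 := by
  have : (Finset.univ.filter fun v : Option (Fin 2 × Fin n) => C v = C none) = {none} := by
    ext x
    rcases x with _ | x
    · simp
    · simp only [mem_filter, mem_univ, true_and, Finset.mem_singleton]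
      constructor
      · intro h; exact absurd h.symm (hp (dw_adj_none x))
      · intro h; exact absurd h (by simp)
  rw [theta, this, Finset.card_singleton]

lemma theta_sum {n k : ℕ} (C : Option (Fin 2 × Fin n) → Fin k) :
    ∑ i, theta C i = 2 * n + 1 := by
  have := Finset.card_eq_sum_card_fiberwise (f := C) (s := Finset.univ) (t := Finset.univ)
    (fun v _ => Finset.mem_univ _)
  simp only [theta]
  rw [← this]
  simp [Finset.card_univ]

lemma theta_le {n k : ℕ} (hn : 2 ≤ n) (C : Option (Fin 2 × Fin n) → Fin k)
    (hp : IsProperColoring (doubleWheelG n) C) (i : Fin k) (hi : i ≠ C none) :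
    theta C i ≤ 2 * (n / 2) := by
  set S : Fin 2 → Finset (Fin n) := fun j => Finset.univ.filter fun v => C (some (j, v)) = i
    with hS
  have hSle : ∀ j, (S j).card ≤ n / 2 := by
    intro j
    apply indep_le n hn
    intro v hv hw
    rw [hS, mem_filter] at hv hw
    exact hp (dw_adj_cyc hn j v ⟨(v.val+1)%n, Nat.mod_lt _ (by omega)⟩ rfl)
      (hv.2.trans hw.2.symm)
  have key : (Finset.univ.filter fun v : Option (Fin 2 × Fin n) => C v = i) =
      ((S 0).image fun v => some (0, v)) ∪ ((S 1).image fun v => some (1, v)) := by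
    ext x
    rcases x with _ | ⟨j, v⟩
    · simp [Ne.symm hi]
    · simp only [mem_filter, mem_univ, true_and, Finset.mem_union, Finset.mem_image, hS]
      constructor
      · intro h
        fin_cases j
        · exact Or.inl ⟨v, by simpa using h, rfl⟩
        · exact Or.inr ⟨v, by simpa using h, rfl⟩
      · rintro (⟨u, hu, he⟩ | ⟨u, hu, he⟩) <;>
        · simp only [Option.some.injEq, Prod.mk.injEq] at he
          obtain ⟨h1, h2⟩ := he
          subst h1; subst h2
          simpa using hu
  have hinj0 : Function.Injective (fun v : Fin n => (some (0, v) : Option (Fin 2 × Fin n))) := by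
    intro a b h; simpa using h
  have hinj1 : Function.Injective (fun v : Fin n => (some (1, v) : Option (Fin 2 × Fin n))) := by
    intro a b h; simpa using h
  have hdisj : Disjoint ((S 0).image fun v => (some (0, v) : Option (Fin 2 × Fin n)))
      ((S 1).image fun v => some (1, v)) := by
    rw [Finset.disjoint_left]
    rintro a ha hb
    rw [Finset.mem_image] at ha hb
    obtain ⟨u, _, rfl⟩ := ha
    obtain ⟨w, _, h⟩ := hb
    simp at h
  rw [theta, key, Finset.card_union_of_disjoint hdisj,
    Finset.card_image_of_injective _ hinj0, Finset.card_image_of_injective _ hinj1]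
  have := hSle 0; have := hSle 1; omega

/-! ### The even witness colouring -/

def evenCol (n : ℕ) : Option (Fin 2 × Fin n) → Fin 3
  | none => 2
  | some (_, v) => ⟨v.val % 2, by omega⟩

lemma evenCol_proper {n : ℕ} (hn : 3 ≤ n) (he : Even n) :
    IsProperColoring (doubleWheelG n) (evenCol n) := by
  have h2 : n % 2 = 0 := Nat.even_iff.mp he
  have key : ∀ (v w : Fin n), w.val = (v.val + 1) % n → v.val % 2 = w.val % 2 → False := by
    intro v w hw hvw
    have hv := v.isLt
    rcases Nat.lt_or_ge (v.val+1) n with h|h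
    · rw [Nat.mod_eq_of_lt h] at hw; omega
    · have : v.val + 1 = n := by omega
      rw [this, Nat.mod_self] at hw; omega
  rintro a b ⟨hne, hr⟩ hEq
  rcases a with _|⟨j,v⟩ <;> rcases b with _|⟨j',w⟩
  · exact hne rfl
  · have : (2:ℕ) = w.val % 2 := congrArg Fin.val hEq
    omega
  · have : v.val % 2 = (2:ℕ) := congrArg Fin.val hEq
    omega
  · simp only at hr
    have hvw : v.val % 2 = w.val % 2 := congrArg Fin.val hEq
    rcases hr with ⟨_, hw⟩ | ⟨_, hw⟩
    · exact key v w hw hvw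
    · exact key w v hw hvw.symm

lemma chi_even {n : ℕ} (hn : 3 ≤ n) (he : Even n) : chi (doubleWheelG n) = 3 := by
  have hc3 : (doubleWheelG n).Colorable 3 :=
    ⟨SimpleGraph.Coloring.mk (evenCol n) (fun {v w} h => evenCol_proper hn he h)⟩
  have hnc2 : ¬ (doubleWheelG n).Colorable 2 := by
    rintro ⟨c⟩
    set v0 : Fin n := ⟨0, by omega⟩
    set v1 : Fin n := ⟨1, by omega⟩
    have ha := c.valid (dw_adj_none (0, v0))
    have hb := c.valid (dw_adj_none (0, v1))
    have hab := c.valid (dw_adj_cyc (by omega) 0 v0 v1 (by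
      show (1 : ℕ) = (0 + 1) % n
      rw [Nat.mod_eq_of_lt (by omega)]))
    rw [Ne, Fin.ext_iff] at ha hb hab
    have h1 := (c none).isLt
    have h2 := (c (some (0, v0))).isLt
    have h3 := (c (some (0, v1))).isLt
    omega
  have le3 : (doubleWheelG n).chromaticNumber ≤ 3 := by
    exact_mod_cast hc3.chromaticNumber_le
  have gt2 : ¬ ((doubleWheelG n).chromaticNumber ≤ 2) := by
    rw [show ((2:ℕ∞)) = ((2:ℕ):ℕ∞) by norm_cast, SimpleGraph.chromaticNumber_le_iff_colorable]
    exact hnc2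
  have hne : (doubleWheelG n).chromaticNumber ≠ ⊤ :=
    ne_top_of_le_ne_top (by simp) le3
  lift (doubleWheelG n).chromaticNumber to ℕ using hne with m hm
  have hle : m ≤ 3 := by exact_mod_cast le3
  have hgt : ¬ (m ≤ 2) := by
    intro h; exact gt2 (by exact_mod_cast h)
  simp only [chi]
  rw [← hm]
  simp only [ENat.toNat_coe]
  omega

lemma evenCol_theta {n : ℕ} (hn : 3 ≤ n) (he : Even n) :
    theta (evenCol n) 0 = n ∧ theta (evenCol n) 1 = n ∧ theta (evenCol n) 2 = 1 := by
  have h2 : n % 2 = 0 := Nat.even_iff.mp he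
  have hp := evenCol_proper hn he
  have ht2 : theta (evenCol n) 2 = 1 := theta_hub (evenCol n) hp
  have hb0 : theta (evenCol n) 0 ≤ 2 * (n / 2) := theta_le (by omega) _ hp 0
    (fun h => by have h' := congrArg Fin.val h; simp [evenCol] at h')
  have hb1 : theta (evenCol n) 1 ≤ 2 * (n / 2) := theta_le (by omega) _ hp 1
    (fun h => by have h' := congrArg Fin.val h; simp [evenCol] at h')
  have hsum := theta_sum (evenCol n)
  rw [Fin.sum_univ_three] at hsum
  omega

lemma evenCol_classSizes {n : ℕ} (hn : 3 ≤ n) (he : Even n) :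
    classSizesDesc (evenCol n) = [n, n, 1] := by
  obtain ⟨h0, h1, h2⟩ := evenCol_theta hn he
  have hofn : (List.ofFn fun i => theta (evenCol n) i) = [n, n, 1] := by
    simp [List.ofFn_succ, h0, h1, h2]
  rw [classSizesDesc, hofn]
  simp [List.insertionSort, List.orderedInsert, show ¬ (n ≤ 1) by omega]

/-! ### The odd cycle argument and the odd witness colouring -/

lemma odd_cycle_no2 {n : ℕ} (hn : 3 ≤ n) (ho : ¬ Even n) {α : Type*} (d : Fin n → α)
    (a b : α) (himg : ∀ v, d v = a ∨ d v = b)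
    (hadj : ∀ v : Fin n, d v ≠ d ⟨(v.val+1)%n, Nat.mod_lt _ (by omega)⟩) : False := by
  have h0 : (0:ℕ) < n := by omega
  have h1n : (1:ℕ) < n := by omega
  have h01 : d ⟨0, h0⟩ ≠ d ⟨1, h1n⟩ := by
    have := hadj ⟨0, h0⟩
    simpa [Nat.mod_eq_of_lt h1n] using this
  have himg' : ∀ v, d v = d ⟨0, h0⟩ ∨ d v = d ⟨1, h1n⟩ := by
    rcases himg ⟨0, h0⟩ with ha | ha <;> rcases himg ⟨1, h1n⟩ with hb | hb
    · exact absurd (ha.trans hb.symm) h01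
    · intro v; rcases himg v with h | h
      · exact Or.inl (h.trans ha.symm)
      · exact Or.inr (h.trans hb.symm)
    · intro v; rcases himg v with h | h
      · exact Or.inr (h.trans hb.symm)
      · exact Or.inl (h.trans ha.symm)
    · exact absurd (ha.trans hb.symm) h01
  have main : ∀ k, ∀ hk : k < n,
      d ⟨k, hk⟩ = (if k % 2 = 0 then d ⟨0, h0⟩ else d ⟨1, h1n⟩) := by
    intro k
    induction k with
    | zero => intro hk; simp
    | succ m ih =>
      intro hk
      have hm : m < n := by omega
      have hprev := ih hm
      have hne := hadj ⟨m, hm⟩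
      have hmod : (m + 1) % n = m + 1 := Nat.mod_eq_of_lt hk
      rw [show (⟨((⟨m, hm⟩ : Fin n).val + 1) % n, Nat.mod_lt _ (by omega)⟩ : Fin n)
        = ⟨m+1, hk⟩ from Fin.ext (by simpa using hmod)] at hne
      rcases Nat.mod_two_eq_zero_or_one m with hm2 | hm2
      · rw [if_pos hm2] at hprev
        rw [if_neg (by omega)]
        rcases himg' ⟨m+1, hk⟩ with h | h
        · exact absurd (h.trans hprev.symm).symm hne
        · exact h
      · rw [if_neg (by omega)] at hprev
        rw [if_pos (by omega)]
        rcases himg' ⟨m+1, hk⟩ with h | h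
        · exact h
        · exact absurd (h.trans hprev.symm).symm hne
  have hlast : n - 1 < n := by omega
  have hfin := main (n-1) hlast
  rw [if_pos (by have := Nat.even_iff.not.mp ho; omega)] at hfin
  have hne := hadj ⟨n-1, hlast⟩
  have hmod : ((n-1) + 1) % n = 0 := by
    rw [Nat.sub_add_cancel (by omega)]; exact Nat.mod_self n
  rw [show (⟨((⟨n-1, hlast⟩ : Fin n).val + 1) % n, Nat.mod_lt _ (by omega)⟩ : Fin n)
    = ⟨0, h0⟩ from Fin.ext (by simpa using hmod)] at hne
  exact hne hfin

def oddCol (n : ℕ) : Option (Fin 2 × Fin n) → Fin 4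
  | none => 3
  | some (_, v) => if v.val = n - 1 then 2 else ⟨v.val % 2, by omega⟩

lemma oddCol_val_some {n : ℕ} (j : Fin 2) (v : Fin n) :
    (oddCol n (some (j, v))).val = if v.val = n - 1 then 2 else v.val % 2 := by
  simp only [oddCol]
  split <;> rfl

lemma oddCol_proper {n : ℕ} (hn : 3 ≤ n) :
    IsProperColoring (doubleWheelG n) (oddCol n) := by
  have key : ∀ (v w : Fin n), w.val = (v.val + 1) % n →
      (oddCol n (some (0, v))).val = (oddCol n (some (0, w))).val → False := by
    intro v w hw hval
    rw [oddCol_val_some, oddCol_val_some] at hval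
    have hv := v.isLt
    rcases Nat.lt_or_ge (v.val+1) n with h|h
    · rw [Nat.mod_eq_of_lt h] at hw
      rcases eq_or_ne v.val (n-1) with h1|h1 <;> rcases eq_or_ne w.val (n-1) with h2|h2 <;>
        simp [h1, h2] at hval <;> omega
    · have he : v.val + 1 = n := by omega
      rw [he, Nat.mod_self] at hw
      rcases eq_or_ne w.val (n-1) with h2|h2 <;>
        simp [show v.val = n-1 by omega, h2] at hval <;> omega
  rintro a b ⟨hne, hr⟩ hEq
  rcases a with _|⟨j,v⟩ <;> rcases b with _|⟨j',w⟩
  · exact hne rfl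
  · have h3 : (oddCol n none).val = (oddCol n (some (j', w))).val := congrArg Fin.val hEq
    rw [oddCol_val_some] at h3
    have h4 : (oddCol n none).val = 3 := rfl
    rw [h4] at h3
    split at h3 <;> omega
  · have h3 : (oddCol n (some (j, v))).val = (oddCol n none).val := congrArg Fin.val hEq
    rw [oddCol_val_some] at h3
    have h4 : (oddCol n none).val = 3 := rfl
    rw [h4] at h3
    split at h3 <;> omega
  · simp only at hr
    have hvw := congrArg Fin.val hEq
    have e1 : oddCol n (some (j, v)) = oddCol n (some ((0:Fin 2), v)) := rfl
    have e2 : oddCol n (some (j', w)) = oddCol n (some ((0:Fin 2), w)) := rfl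
    rcases hr with ⟨_, hw⟩ | ⟨_, hw⟩
    · exact key v w hw (by rw [← e1, ← e2]; exact hvw)
    · exact key w v hw (by rw [← e1, ← e2]; exact hvw.symm)

lemma odd_nc3 {n : ℕ} (hn : 3 ≤ n) (ho : ¬ Even n) : ¬ (doubleWheelG n).Colorable 3 := by
  rintro ⟨c⟩
  have hcompl : ∀ h x : Fin 3, x ≠ h → x = h + 1 ∨ x = h + 2 := by decide
  set d : Fin n → Fin 3 := fun v => c (some (0, v)) with hd
  have himg : ∀ v, d v = c none + 1 ∨ d v = c none + 2 := fun v =>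
    hcompl _ _ (Ne.symm (c.valid (dw_adj_none (0, v))))
  have hadj : ∀ v : Fin n, d v ≠ d ⟨(v.val+1)%n, Nat.mod_lt _ (by omega)⟩ := fun v =>
    c.valid (dw_adj_cyc (by omega) 0 v ⟨(v.val+1)%n, Nat.mod_lt _ (by omega)⟩ rfl)
  exact odd_cycle_no2 hn ho d _ _ himg hadj

lemma chi_odd {n : ℕ} (hn : 3 ≤ n) (ho : ¬ Even n) : chi (doubleWheelG n) = 4 := by
  have hc4 : (doubleWheelG n).Colorable 4 :=
    ⟨SimpleGraph.Coloring.mk (oddCol n) (fun {v w} h => oddCol_proper hn h)⟩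
  have le4 : (doubleWheelG n).chromaticNumber ≤ 4 := by
    exact_mod_cast hc4.chromaticNumber_le
  have gt3 : ¬ ((doubleWheelG n).chromaticNumber ≤ 3) := by
    rw [show ((3:ℕ∞)) = ((3:ℕ):ℕ∞) by norm_cast, SimpleGraph.chromaticNumber_le_iff_colorable]
    exact odd_nc3 hn ho
  have hne : (doubleWheelG n).chromaticNumber ≠ ⊤ :=
    ne_top_of_le_ne_top (by simp) le4
  lift (doubleWheelG n).chromaticNumber to ℕ using hne with m hm
  have hle : m ≤ 4 := by exact_mod_cast le4
  have hgt : ¬ (m ≤ 3) := by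
    intro h; exact gt3 (by exact_mod_cast h)
  simp only [chi]
  rw [← hm]
  simp only [ENat.toNat_coe]
  omega

lemma oddCol_theta {n : ℕ} (hn : 3 ≤ n) (ho : ¬ Even n) :
    theta (oddCol n) 0 = n - 1 ∧ theta (oddCol n) 1 = n - 1 ∧
      theta (oddCol n) 2 = 2 ∧ theta (oddCol n) 3 = 1 := by
  have h2 : n % 2 = 1 := Nat.odd_iff.mp (Nat.odd_iff.mpr (by
    have := Nat.even_or_odd n
    rcases this with h | h
    · exact absurd h ho
    · exact Nat.odd_iff.mp h))
  have hp := oddCol_proper hn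
  have ht3 : theta (oddCol n) 3 = 1 := theta_hub (oddCol n) hp
  have ht2 : theta (oddCol n) 2 = 2 := by
    have hfil : (Finset.univ.filter fun v : Option (Fin 2 × Fin n) => oddCol n v = 2) =
        {some (0, ⟨n-1, by omega⟩), some (1, ⟨n-1, by omega⟩)} := by
      ext x
      rcases x with _ | ⟨j, v⟩
      · simp only [mem_filter, mem_univ, true_and, Finset.mem_insert, Finset.mem_singleton]
        constructor
        · intro h
          have := congrArg Fin.val h
          have h4 : (oddCol n none).val = 3 := rfl
          rw [h4] at this
          simp at this
        · intro h; rcases h with h | h <;> exact absurd h (by simp)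
      · simp only [mem_filter, mem_univ, true_and, Finset.mem_insert, Finset.mem_singleton]
        have hj : j = 0 ∨ j = 1 := by
          fin_cases j
          · exact Or.inl rfl
          · exact Or.inr rfl
        constructor
        · intro h
          have hval := congrArg Fin.val h
          rw [oddCol_val_some] at hval
          have hv : v.val = n - 1 := by
            by_contra hc
            rw [if_neg hc] at hval
            simp at hval
            omega
          have hveq : v = (⟨n-1, by omega⟩ : Fin n) := Fin.ext hv
          rcases hj with rfl | rfl
          · exact Or.inl (by rw [hveq])
          · exact Or.inr (by rw [hveq])
        · intro h
          rcases h with h | h <;>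
          · simp only [Option.some.injEq, Prod.mk.injEq] at h
            obtain ⟨rfl, rfl⟩ := h
            apply Fin.ext
            rw [oddCol_val_some, if_pos rfl]
            rfl
    rw [theta, hfil, Finset.card_insert_of_notMem (by simp), Finset.card_singleton]
  have hb0 : theta (oddCol n) 0 ≤ 2 * (n / 2) := theta_le (by omega) _ hp 0
    (fun h => by have h' := congrArg Fin.val h; simp [oddCol] at h')
  have hb1 : theta (oddCol n) 1 ≤ 2 * (n / 2) := theta_le (by omega) _ hp 1
    (fun h => by have h' := congrArg Fin.val h; simp [oddCol] at h')
  have hsum := theta_sum (oddCol n)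
  rw [Fin.sum_univ_four] at hsum
  omega

lemma oddCol_classSizes {n : ℕ} (hn : 3 ≤ n) (ho : ¬ Even n) :
    classSizesDesc (oddCol n) = [n - 1, n - 1, 2, 1] := by
  obtain ⟨h0, h1, h2, h3⟩ := oddCol_theta hn ho
  have hofn : (List.ofFn fun i => theta (oddCol n) i) = [n - 1, n - 1, 2, 1] := by
    simp [List.ofFn_succ, show (Fin.succ 2 : Fin 4) = 3 by rfl, h0, h1, h2, h3]
  rw [classSizesDesc, hofn]
  rcases eq_or_ne n 3 with rfl | hne
  · norm_num [List.insertionSort, List.orderedInsert]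
  · simp [List.insertionSort, List.orderedInsert, show ¬ (n - 1 ≤ 1) by omega,
      show ¬ (n - 1 ≤ 2) by omega, show ¬ ((2:ℕ) ≤ 1) by omega]

/-! ### Main arguments -/

lemma even_main (n : ℕ) (hn : 3 ≤ n) (he : Even n) (k : ℕ) (hk : k = 3)
    (C : Option (Fin 2 × Fin n) → Fin k) (hp : IsProperColoring (doubleWheelG n) C)
    (hlex : ∀ C' : Option (Fin 2 × Fin n) → Fin k, IsProperColoring (doubleWheelG n) C' →
      ¬ List.Lex (· < ·) (classSizesDesc C) (classSizesDesc C')) :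
    ∏ i, theta C i = n ^ 2 := by
  subst hk
  have h2 : n % 2 = 0 := Nat.even_iff.mp he
  have hl := hlex (evenCol n) (evenCol_proper hn he)
  rw [evenCol_classSizes hn he] at hl
  have hofn : (List.ofFn fun i => theta C i) = [theta C 0, theta C 1, theta C 2] := by
    simp [List.ofFn_succ]
  have hperm : List.Perm (classSizesDesc C) [theta C 0, theta C 1, theta C 2] := by
    rw [classSizesDesc, hofn]
    exact (List.reverse_perm _).trans (List.perm_insertionSort _ _)
  have hlen : (classSizesDesc C).length = 3 := by rw [hperm.length_eq]; rfl
  obtain ⟨a1, a2, a3, hA⟩ := List.length_eq_three.mp hlen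
  rw [hA] at hl hperm
  have hb : ∀ i : Fin 3, theta C i ≤ n := by
    intro i
    by_cases hi : i = C none
    · rw [hi, theta_hub C hp]; omega
    · have := theta_le (by omega) C hp i hi; omega
  have hmem : ∀ x ∈ [a1, a2, a3], x ≤ n := by
    intro x hx
    have hx' := hperm.subset hx
    simp only [List.mem_cons, List.not_mem_nil, or_false] at hx'
    rcases hx' with rfl | rfl | rfl <;> exact hb _
  have hsum : a1 + a2 + a3 = 2 * n + 1 := by
    have hs := hperm.sum_eq
    have hs2 := theta_sum C
    rw [Fin.sum_univ_three] at hs2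
    simp at hs
    omega
  have ha1 : a1 = n := by
    by_contra h
    exact hl (List.Lex.rel (lt_of_le_of_ne (hmem a1 (by simp)) h))
  rw [ha1] at hl hperm hsum
  have ha2 : a2 = n := by
    by_contra h
    exact hl (List.Lex.cons (List.Lex.rel (lt_of_le_of_ne (hmem a2 (by simp)) h)))
  rw [ha2] at hperm hsum
  have ha3 : a3 = 1 := by omega
  rw [ha3] at hperm
  have hprod := hperm.prod_eq
  simp at hprod
  rw [Fin.prod_univ_three, mul_assoc, ← hprod]
  ring

lemma odd_main (n : ℕ) (hn : 3 ≤ n) (ho : ¬ Even n) (k : ℕ) (hk : k = 4)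
    (C : Option (Fin 2 × Fin n) → Fin k) (hp : IsProperColoring (doubleWheelG n) C)
    (hlex : ∀ C' : Option (Fin 2 × Fin n) → Fin k, IsProperColoring (doubleWheelG n) C' →
      ¬ List.Lex (· < ·) (classSizesDesc C) (classSizesDesc C')) :
    ∏ i, theta C i = 2 * (n - 1) ^ 2 := by
  subst hk
  have h2 : n % 2 = 1 := by
    rcases Nat.even_or_odd n with h | h
    · exact absurd h ho
    · exact Nat.odd_iff.mp h
  have hl := hlex (oddCol n) (oddCol_proper hn)
  rw [oddCol_classSizes hn ho] at hl
  have hofn : (List.ofFn fun i => theta C i) =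
      [theta C 0, theta C 1, theta C 2, theta C 3] := by
    simp [List.ofFn_succ, show (Fin.succ 2 : Fin 4) = 3 by rfl]
  have hperm : List.Perm (classSizesDesc C) [theta C 0, theta C 1, theta C 2, theta C 3] := by
    rw [classSizesDesc, hofn]
    exact (List.reverse_perm _).trans (List.perm_insertionSort _ _)
  have hlen : (classSizesDesc C).length = 4 := by rw [hperm.length_eq]; rfl
  obtain ⟨a1, A1, hA1⟩ : ∃ a l, classSizesDesc C = a :: l := by
    rcases hX : classSizesDesc C with _ | ⟨a, l⟩
    · rw [hX] at hlen; simp at hlen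
    · exact ⟨a, l, rfl⟩
  rw [hA1] at hlen
  obtain ⟨a2, A2, hA2⟩ : ∃ a l, A1 = a :: l := by
    rcases hX : A1 with _ | ⟨a, l⟩
    · rw [hX] at hlen; simp at hlen
    · exact ⟨a, l, rfl⟩
  rw [hA2] at hlen
  obtain ⟨a3, A3, hA3⟩ : ∃ a l, A2 = a :: l := by
    rcases hX : A2 with _ | ⟨a, l⟩
    · rw [hX] at hlen; simp at hlen
    · exact ⟨a, l, rfl⟩
  rw [hA3] at hlen
  obtain ⟨a4, A4, hA4⟩ : ∃ a l, A3 = a :: l := by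
    rcases hX : A3 with _ | ⟨a, l⟩
    · rw [hX] at hlen; simp at hlen
    · exact ⟨a, l, rfl⟩
  rw [hA4] at hlen
  have hA4nil : A4 = [] := by
    rcases A4 with _ | _
    · rfl
    · simp at hlen
  have hA : classSizesDesc C = [a1, a2, a3, a4] := by
    rw [hA1, hA2, hA3, hA4, hA4nil]
  rw [hA] at hl hperm
  have hb : ∀ i : Fin 4, theta C i ≤ n - 1 := by
    intro i
    by_cases hi : i = C none
    · rw [hi, theta_hub C hp]; omega
    · have := theta_le (by omega) C hp i hi; omega
  have hmem : ∀ x ∈ [a1, a2, a3, a4], x ≤ n - 1 := by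
    intro x hx
    have hx' := hperm.subset hx
    simp only [List.mem_cons, List.not_mem_nil, or_false] at hx'
    rcases hx' with rfl | rfl | rfl | rfl <;> exact hb _
  have hsum : a1 + a2 + a3 + a4 = 2 * n + 1 := by
    have hs := hperm.sum_eq
    have hs2 := theta_sum C
    rw [Fin.sum_univ_four] at hs2
    simp at hs
    omega
  have h1mem : (1:ℕ) ∈ [a1, a2, a3, a4] := by
    have hhub := theta_hub C hp
    have hcases : C none = 0 ∨ C none = 1 ∨ C none = 2 ∨ C none = 3 := by
      have : ∀ x : Fin 4, x = 0 ∨ x = 1 ∨ x = 2 ∨ x = 3 := by decide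
      exact this _
    apply hperm.mem_iff.mpr
    rcases hcases with h | h | h | h <;> rw [h] at hhub <;> simp [← hhub]
  have ha1 : a1 = n - 1 := by
    by_contra h
    exact hl (List.Lex.rel (lt_of_le_of_ne (hmem a1 (by simp)) h))
  rw [ha1] at hl hperm hsum h1mem
  have ha2 : a2 = n - 1 := by
    by_contra h
    exact hl (List.Lex.cons (List.Lex.rel (lt_of_le_of_ne (hmem a2 (by simp)) h)))
  rw [ha2] at hl hperm hsum h1mem
  have ha3 : 2 ≤ a3 := by
    by_contra h
    exact hl (List.Lex.cons (List.Lex.cons (List.Lex.rel (by omega))))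
  have ha34 : a3 + a4 = 3 := by omega
  have ha3' : a3 = 2 ∧ a4 = 1 := by
    rcases eq_or_ne a3 2 with h3 | h3
    · exact ⟨h3, by omega⟩
    · exfalso
      have h33 : a3 = 3 := by
        have := hmem a3 (by simp)
        omega
      have h40 : a4 = 0 := by omega
      simp only [List.mem_cons, List.not_mem_nil, or_false] at h1mem
      omega
  rw [ha3'.1, ha3'.2] at hperm
  have hprod := hperm.prod_eq
  simp at hprod
  have hgoal : theta C 0 * theta C 1 * theta C 2 * theta C 3
      = theta C 0 * (theta C 1 * (theta C 2 * theta C 3)) := by ring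
  rw [Fin.prod_univ_four, hgoal, ← hprod]
  ring

theorem doubleWheelGraph_chromaticCompoundCurlingNumber (n : ℕ) (hn : 3 ≤ n)
    (C : Option (Fin 2 × Fin n) → Fin (chi (doubleWheelG n)))
    (hC : IsChiMinusColoring (doubleWheelG n) C) :
    ∏ i, theta C i = if Even n then n ^ 2 else 2 * (n - 1) ^ 2 := by
  by_cases he : Even n
  · rw [if_pos he]
    exact even_main n hn he _ (chi_even hn he) C hC.1 hC.2
  · rw [if_neg he]
    exact odd_main n hn he _ (chi_odd hn he) C hC.1 hC.2
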